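/- arXiv:2302.03627 — 4 statements merged into one kernel-verified Lean document; each statement's English description precedes it below -/
import Mathlib

section
/- Let G be an undirected graph, v* a vertex, and R a family of vertex subsets each containing v*. Define C to be the set of pairs (X, (X_L, X_R)) where X ∈ R and (X_L, X_R) is a consistent cut of G[X] with v* ∈ X_L. If |C| is odd, then there exists X ∈ R such that G[X] is connected. -/
/-- A fixed-point-free involution on a finite type forces the cardinality to be even. -/
lemma even_natCard_of_involutive {α : Type*} [Finite α] (f : α → α)
    (h2 : Function.Involutive f) (hnf : ∀ a, f a ≠ a) : Even (Nat.card α) := by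
  classical
  cases nonempty_fintype α
  let F : Function.End α := f
  have hf : F ^ 2 ^ 1 = 1 := by
    have hsq : F ^ 2 ^ 1 = F * F := by rw [pow_one, sq]
    rw [hsq]
    exact funext fun a => h2 a
  have hmod := Equiv.Perm.card_fixedPoints_modEq (α := α) (p := 2) (n := 1) hf
  have hempty : IsEmpty (Function.fixedPoints F) := by
    refine ⟨fun x => hnf x.1 x.2⟩
  rw [Fintype.card_eq_zero_iff.mpr hempty] at hmod
  have : (2 : ℕ) ∣ Fintype.card α := (Nat.modEq_zero_iff_dvd).mp hmod
  rw [Nat.card_eq_fintype_card]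
  exact even_iff_two_dvd.mpr this

/-- If the number of pairs `(X, (XL, XR))` with `X ∈ R` and `(XL, XR)` a consistent cut
of `G[X]` with `vs ∈ XL` is odd, then some `X ∈ R` induces a connected subgraph. -/
theorem odd_consistent_cuts_connected {V : Type*} [Fintype V] (G : SimpleGraph V)
    (vs : V) (R : Set (Set V)) (hR : ∀ X ∈ R, vs ∈ X)
    (hodd : Odd (Nat.card {p : Set V × (Set V × Set V) //
        p.1 ∈ R ∧ p.2.1 ∪ p.2.2 = p.1 ∧ p.2.1 ∩ p.2.2 = ∅ ∧ vs ∈ p.2.1 ∧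
        ∀ x ∈ p.2.1, ∀ y ∈ p.2.2, ¬ G.Adj x y})) :
    ∃ X ∈ R, (G.induce X).Connected := by
  classical
  by_contra hcon
  push_neg at hcon
  -- For each `X ∈ R`, since `G[X]` is disconnected we find a "component" `K` avoiding `vs`.
  have key : ∀ X ∈ R, ∃ K : Set V, vs ∉ K ∧ K.Nonempty ∧ K ⊆ X ∧
      (∀ x ∈ K, ∀ y ∈ X, G.Adj x y → y ∈ K) := by
    intro X hX
    have hvs : vs ∈ X := hR X hX
    have hne : Nonempty ↑X := ⟨⟨vs, hvs⟩⟩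
    have hnp : ¬ (G.induce X).Preconnected := by
      intro hp
      exact hcon X hX ⟨hp⟩
    rw [SimpleGraph.Preconnected] at hnp
    push_neg at hnp
    obtain ⟨u, v, huv⟩ := hnp
    have hw : ∃ w : ↑X, ¬ (G.induce X).Reachable ⟨vs, hvs⟩ w := by
      by_contra h'
      push_neg at h'
      exact huv ((h' u).symm.trans (h' v))
    obtain ⟨w, hw⟩ := hw
    refine ⟨Subtype.val '' {y : ↑X | (G.induce X).Reachable w y}, ?_, ?_, ?_, ?_⟩
    · rintro ⟨y, hy, hyv⟩
      apply hw
      have : y = ⟨vs, hvs⟩ := Subtype.ext hyv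
      exact (this ▸ hy).symm
    · exact ⟨w.1, w, SimpleGraph.Reachable.refl w, rfl⟩
    · rintro x ⟨y, _, rfl⟩; exact y.2
    · rintro x ⟨x', hx', rfl⟩ y hy hadj
      refine ⟨⟨y, hy⟩, hx'.trans (SimpleGraph.Adj.reachable ?_), rfl⟩
      exact hadj
  choose K hKvs hKne hKsub hKcl using key
  -- The type of consistent cut pairs.
  set C := {p : Set V × (Set V × Set V) //
      p.1 ∈ R ∧ p.2.1 ∪ p.2.2 = p.1 ∧ p.2.1 ∩ p.2.2 = ∅ ∧ vs ∈ p.2.1 ∧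
      ∀ x ∈ p.2.1, ∀ y ∈ p.2.2, ¬ G.Adj x y} with hC
  -- The involution: toggle the component `K X` between the two sides.
  have flip_mem : ∀ (X L Rr : Set V) (hX : X ∈ R), L ∪ Rr = X → L ∩ Rr = ∅ → vs ∈ L →
      (∀ x ∈ L, ∀ y ∈ Rr, ¬ G.Adj x y) →
      (symmDiff L (K X hX) ∪ symmDiff Rr (K X hX) = X ∧
       symmDiff L (K X hX) ∩ symmDiff Rr (K X hX) = ∅ ∧ vs ∈ symmDiff L (K X hX) ∧
       ∀ x ∈ symmDiff L (K X hX), ∀ y ∈ symmDiff Rr (K X hX), ¬ G.Adj x y) := by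
    intro X L Rr hX hU hI hvsL hE
    have hUx : ∀ x, (x ∈ L ∨ x ∈ Rr) ↔ x ∈ X := fun x => by
      rw [← hU]; exact Iff.rfl
    have hIx : ∀ x, ¬ (x ∈ L ∧ x ∈ Rr) := fun x hx => by
      have : x ∈ L ∩ Rr := hx
      rw [hI] at this; exact this
    have hKx : ∀ x, x ∈ K X hX → x ∈ X := fun x hx => hKsub X hX hx
    refine ⟨?_, ?_, ?_, ?_⟩
    · ext x
      have h1 := hUx x; have h2 := hIx x; have h3 := hKx x
      simp only [Set.mem_union, Set.mem_symmDiff]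
      tauto
    · ext x
      have h1 := hUx x; have h2 := hIx x; have h3 := hKx x
      simp only [Set.mem_inter_iff, Set.mem_symmDiff, Set.mem_empty_iff_false, iff_false]
      tauto
    · rw [Set.mem_symmDiff]
      exact Or.inl ⟨hvsL, hKvs X hX⟩
    · intro x hx y hy hadj
      rw [Set.mem_symmDiff] at hx hy
      rcases hx with ⟨hxL, hxK⟩ | ⟨hxK, hxL⟩
      · rcases hy with ⟨hyR, hyK⟩ | ⟨hyK, hyR⟩
        · exact hE x hxL y hyR hadj
        · exact hxK (hKcl X hX y hyK x ((hUx x).mp (Or.inl hxL)) hadj.symm)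
      · rcases hy with ⟨hyR, hyK⟩ | ⟨hyK, hyR⟩
        · exact hyK (hKcl X hX x hxK y ((hUx y).mp (Or.inr hyR)) hadj)
        · have hxX := hKx x hxK
          have hyX := hKx y hyK
          have hxR : x ∈ Rr := ((hUx x).mpr hxX).resolve_left hxL
          have hyL : y ∈ L := ((hUx y).mpr hyX).resolve_right hyR
          exact hE y hyL x hxR hadj.symm
  let Φ : C → C := fun p =>
    ⟨(p.1.1, (symmDiff p.1.2.1 (K p.1.1 p.2.1), symmDiff p.1.2.2 (K p.1.1 p.2.1))),
      p.2.1, (flip_mem p.1.1 p.1.2.1 p.1.2.2 p.2.1 p.2.2.1 p.2.2.2.1 p.2.2.2.2.1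
        p.2.2.2.2.2)⟩
  have hΦinv : Function.Involutive Φ := by
    intro p
    apply Subtype.ext
    show ((p.1.1, (symmDiff (symmDiff p.1.2.1 (K p.1.1 p.2.1)) (K p.1.1 p.2.1),
      symmDiff (symmDiff p.1.2.2 (K p.1.1 p.2.1)) (K p.1.1 p.2.1))) : Set V × (Set V × Set V))
      = p.1
    rw [symmDiff_symmDiff_cancel_right, symmDiff_symmDiff_cancel_right]
  have hΦnf : ∀ p, Φ p ≠ p := by
    intro p hp
    obtain ⟨w, hw⟩ := hKne p.1.1 p.2.1
    have h1 : symmDiff p.1.2.1 (K p.1.1 p.2.1) = p.1.2.1 := by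
      have := congrArg (fun q : C => q.1.2.1) hp
      exact this
    have h2 : w ∈ symmDiff p.1.2.1 (K p.1.1 p.2.1) ↔ w ∈ p.1.2.1 := by rw [h1]
    rw [Set.mem_symmDiff] at h2
    tauto
  have : Even (Nat.card C) := even_natCard_of_involutive Φ hΦinv hΦnf
  exact (Nat.not_even_iff_odd.mpr hodd) this
end

section
/- Let F be a nonempty family of subsets of a finite universe U, let N be a positive integer, and choose a weight w(u) ∈ {1,...,N} uniformly and independently at random for each u ∈ U. Then the probability that w isolates F (i.e., there is a unique S ∈ F of minimum total weight w(S) = Σ_{u∈S} w(u)) is at least 1 − |U|/N. -/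
open Finset

private lemma isolation_bad_card_le {U : Type*} [Fintype U] [DecidableEq U]
    (F : Finset (Finset U)) (N : ℕ) (u : U) :
    (Finset.univ.filter (fun w : U → (Finset.Icc 1 N : Finset ℕ) =>
        ∃ S ∈ F, ∃ T ∈ F, u ∈ S ∧ u ∉ T ∧
          (∀ R ∈ F, ∑ v ∈ S, (w v : ℕ) ≤ ∑ v ∈ R, (w v : ℕ)) ∧
          (∀ R ∈ F, ∑ v ∈ T, (w v : ℕ) ≤ ∑ v ∈ R, (w v : ℕ)))).card
      ≤ N ^ (Fintype.card U - 1) := by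
  classical
  have key : (Finset.univ.filter (fun w : U → (Finset.Icc 1 N : Finset ℕ) =>
        ∃ S ∈ F, ∃ T ∈ F, u ∈ S ∧ u ∉ T ∧
          (∀ R ∈ F, ∑ v ∈ S, (w v : ℕ) ≤ ∑ v ∈ R, (w v : ℕ)) ∧
          (∀ R ∈ F, ∑ v ∈ T, (w v : ℕ) ≤ ∑ v ∈ R, (w v : ℕ)))).card
      ≤ (Finset.univ : Finset ({v : U // v ≠ u} → (Finset.Icc 1 N : Finset ℕ))).card := by
    apply Finset.card_le_card_of_injOn
      (fun w => fun v : {v : U // v ≠ u} => w v)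
    · intro w _; exact mem_univ _
    · intro w hw w' hw' heq
      simp only [coe_filter, Set.mem_setOf_eq, mem_univ, true_and] at hw hw'
      obtain ⟨S, hS, T, hT, huS, huT, hSmin, hTmin⟩ := hw
      obtain ⟨S', hS', T', hT', huS', huT', hSmin', hTmin'⟩ := hw'
      have hoff : ∀ v : U, v ≠ u → w v = w' v := by
        intro v hv
        exact congrFun heq ⟨v, hv⟩
      have hsum : ∀ R : Finset U, u ∉ R →
          ∑ v ∈ R, (w v : ℕ) = ∑ v ∈ R, (w' v : ℕ) := by
        intro R hR
        exact Finset.sum_congr rfl fun v hv => by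
          rw [hoff v (fun h => hR (h ▸ hv))]
      have hsume : ∀ R : Finset U,
          ∑ v ∈ R.erase u, (w v : ℕ) = ∑ v ∈ R.erase u, (w' v : ℕ) := by
        intro R; exact hsum _ (Finset.notMem_erase u R)
      have hdecomp : ∀ R : Finset U, u ∈ R →
          ∑ v ∈ R, (w v : ℕ) = ∑ v ∈ R.erase u, (w v : ℕ) + (w u : ℕ) :=
        fun R hR => (Finset.sum_erase_add R _ hR).symm
      have hdecomp' : ∀ R : Finset U, u ∈ R →
          ∑ v ∈ R, (w' v : ℕ) = ∑ v ∈ R.erase u, (w' v : ℕ) + (w' u : ℕ) :=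
        fun R hR => (Finset.sum_erase_add R _ hR).symm
      have h1 : (w u : ℕ) ≤ (w' u : ℕ) := by
        have c1 : ∑ v ∈ S, (w v : ℕ) ≤ ∑ v ∈ T', (w v : ℕ) := hSmin T' hT'
        have c2 : ∑ v ∈ T', (w' v : ℕ) ≤ ∑ v ∈ S, (w' v : ℕ) := hTmin' S hS
        rw [hsum T' huT'] at c1
        have := le_trans c1 c2
        rw [hdecomp S huS, hdecomp' S huS, hsume S] at this
        omega
      have h2 : (w' u : ℕ) ≤ (w u : ℕ) := by
        have c1 : ∑ v ∈ S', (w' v : ℕ) ≤ ∑ v ∈ T, (w' v : ℕ) := hSmin' T hT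
        have c2 : ∑ v ∈ T, (w v : ℕ) ≤ ∑ v ∈ S', (w v : ℕ) := hTmin S' hS'
        rw [← hsum T huT] at c1
        have := le_trans c1 c2
        rw [hdecomp S' huS', hdecomp' S' huS', hsume S'] at this
        omega
      have huu : w u = w' u := Subtype.ext (le_antisymm h1 h2)
      funext v
      by_cases hv : v = u
      · rw [hv]; exact huu
      · exact hoff v hv
  calc _ ≤ _ := key
    _ = N ^ (Fintype.card U - 1) := by
        rw [Finset.card_univ, Fintype.card_fun]
        congr 1
        · simp [Nat.card_Icc]
        · rw [Fintype.card_subtype_compl, Fintype.card_subtype_eq]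

/-- Isolation Lemma: if every weight `w u` is chosen uniformly and independently
from `{1, ..., N}`, then with probability at least `1 - |U|/N` there is a unique
member of the nonempty family `F` of minimum total weight.  Formulated as a count:
the fraction of weight functions `w : U → {1,...,N}` isolating `F` is at least
`1 - |U|/N`. -/
theorem isolation_lemma {U : Type*} [Fintype U] [DecidableEq U]
    (F : Finset (Finset U)) (hF : F.Nonempty) (N : ℕ) (hN : 0 < N) :
    (1 : ℚ) - (Fintype.card U : ℚ) / (N : ℚ) ≤
      (Nat.card {w : U → (Finset.Icc 1 N : Finset ℕ) //
          ∃! S : Finset U, S ∈ F ∧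
            ∀ T ∈ F, ∑ u ∈ S, (w u : ℕ) ≤ ∑ u ∈ T, (w u : ℕ)} : ℚ) /
        (N : ℚ) ^ Fintype.card U := by
  classical
  set n := Fintype.card U with hn
  set P : (U → (Finset.Icc 1 N : Finset ℕ)) → Prop := fun w =>
    ∃! S : Finset U, S ∈ F ∧ ∀ T ∈ F, ∑ u ∈ S, (w u : ℕ) ≤ ∑ u ∈ T, (w u : ℕ)
    with hP
  have hcard : Nat.card {w : U → (Finset.Icc 1 N : Finset ℕ) // P w}
      = (Finset.univ.filter P).card := by
    rw [Nat.card_eq_fintype_card, Fintype.card_subtype]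
  have hsubset : Finset.univ.filter (fun w => ¬ P w) ⊆
      Finset.univ.biUnion (fun u : U =>
        Finset.univ.filter (fun w : U → (Finset.Icc 1 N : Finset ℕ) =>
          ∃ S ∈ F, ∃ T ∈ F, u ∈ S ∧ u ∉ T ∧
            (∀ R ∈ F, ∑ v ∈ S, (w v : ℕ) ≤ ∑ v ∈ R, (w v : ℕ)) ∧
            (∀ R ∈ F, ∑ v ∈ T, (w v : ℕ) ≤ ∑ v ∈ R, (w v : ℕ)))) := by
    intro w hw
    rw [mem_filter] at hw
    have hnp := hw.2
    obtain ⟨S₀, hS₀, hmin⟩ := F.exists_min_image (fun S => ∑ v ∈ S, (w v : ℕ)) hF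
    have : ∃ T, (T ∈ F ∧ ∀ R ∈ F, ∑ v ∈ T, (w v : ℕ) ≤ ∑ v ∈ R, (w v : ℕ)) ∧ T ≠ S₀ := by
      by_contra h
      push_neg at h
      exact hnp ⟨S₀, ⟨hS₀, hmin⟩, fun T hT => h T hT⟩
    obtain ⟨T₀, ⟨hT₀, hmin'⟩, hne⟩ := this
    have : ∃ u : U, (u ∈ T₀ ∧ u ∉ S₀) ∨ (u ∈ S₀ ∧ u ∉ T₀) := by
      by_contra h
      push_neg at h
      apply hne
      ext v
      constructor
      · intro hv; exact (h v).1 hv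
      · intro hv; exact (h v).2 hv
    obtain ⟨u, hu⟩ := this
    rw [mem_biUnion]
    refine ⟨u, mem_univ u, ?_⟩
    rw [mem_filter]
    refine ⟨mem_univ _, ?_⟩
    rcases hu with ⟨h1, h2⟩ | ⟨h1, h2⟩
    · exact ⟨T₀, hT₀, S₀, hS₀, h1, h2, hmin', hmin⟩
    · exact ⟨S₀, hS₀, T₀, hT₀, h1, h2, hmin, hmin'⟩
  have hbad : (Finset.univ.filter (fun w => ¬ P w)).card ≤ n * N ^ (n - 1) := by
    calc (Finset.univ.filter (fun w => ¬ P w)).card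
        ≤ _ := Finset.card_le_card hsubset
      _ ≤ ∑ u : U, (Finset.univ.filter (fun w : U → (Finset.Icc 1 N : Finset ℕ) =>
            ∃ S ∈ F, ∃ T ∈ F, u ∈ S ∧ u ∉ T ∧
              (∀ R ∈ F, ∑ v ∈ S, (w v : ℕ) ≤ ∑ v ∈ R, (w v : ℕ)) ∧
              (∀ R ∈ F, ∑ v ∈ T, (w v : ℕ) ≤ ∑ v ∈ R, (w v : ℕ)))).card :=
          Finset.card_biUnion_le
      _ ≤ ∑ _u : U, N ^ (n - 1) :=
          Finset.sum_le_sum fun u _ => isolation_bad_card_le F N u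
      _ = n * N ^ (n - 1) := by rw [Finset.sum_const, Finset.card_univ, smul_eq_mul]
  have htotal : (Finset.univ.filter P).card + (Finset.univ.filter (fun w => ¬ P w)).card
      = N ^ n := by
    rw [Finset.card_filter_add_card_filter_not, Finset.card_univ, Fintype.card_fun]
    congr 1
    simp [Nat.card_Icc]
  rw [hcard]
  have hNpos : (0:ℚ) < (N:ℚ) := by exact_mod_cast hN
  have hpow : (0:ℚ) < (N:ℚ) ^ n := pow_pos hNpos n
  rw [le_div_iff₀ hpow]
  have hgood : ((N:ℚ) ^ n) - (n : ℚ) * (N:ℚ) ^ (n-1) ≤ ((Finset.univ.filter P).card : ℚ) := by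
    have h1 : ((Finset.univ.filter P).card : ℚ)
        = (N:ℚ) ^ n - ((Finset.univ.filter (fun w => ¬ P w)).card : ℚ) := by
      have h2 := htotal
      have : (((Finset.univ.filter P).card : ℚ)
          + ((Finset.univ.filter (fun w => ¬ P w)).card : ℚ)) = (N:ℚ) ^ n := by
        exact_mod_cast congrArg (Nat.cast : ℕ → ℚ) h2
      linarith
    rw [h1]
    have : ((Finset.univ.filter (fun w => ¬ P w)).card : ℚ) ≤ (n:ℚ) * (N:ℚ)^(n-1) := by
      exact_mod_cast hbad
    linarith
  refine le_trans ?_ hgood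
  rcases Nat.eq_zero_or_pos n with h0 | hpos
  · simp [h0]
  · have hsplit : (N:ℚ) ^ n = (N:ℚ) * (N:ℚ) ^ (n - 1) := by
      rw [← pow_succ']
      congr 1
      omega
    rw [hsplit]
    have heq : ((1:ℚ) - (n:ℚ)/(N:ℚ)) * ((N:ℚ) * (N:ℚ)^(n-1))
        = (N:ℚ)*(N:ℚ)^(n-1) - (n:ℚ)*(N:ℚ)^(n-1) := by
      field_simp
    linarith [heq]
end

section
/- Let F ⊆ 2^U be a closure difference over a finite universe and R a commutative ring with unit. For any tables A, B : F → R, the Zeta transform of their cover product equals the pointwise product of their Zeta transforms: ζ(A ⊗_c B) = (ζA) · (ζB), where (A ⊗_c B)(S) = Σ_{T₁, T₂ ∈ F, T₁ ∪ T₂ = S} A(T₁)B(T₂). -/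
/-- For a closure difference `F` (given via the equivalent interval property),
the Zeta transform of the cover product equals the pointwise product of the
Zeta transforms: `ζ(A ⊗_c B) = (ζA) · (ζB)`. -/
theorem zeta_cover_product {U : Type*} [Fintype U] [DecidableEq U]
    {R : Type*} [CommRing R] (F : Finset (Finset U))
    (hF : ∀ W T S : Finset U, W ⊆ T → T ⊆ S → W ∈ F → S ∈ F → T ∈ F)
    (A B : Finset U → R) :
    ∀ S ∈ F,
      (∑ T ∈ F.filter (· ⊆ S),
          ∑ p ∈ (F ×ˢ F).filter (fun p => p.1 ∪ p.2 = T), A p.1 * B p.2) =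
        (∑ T ∈ F.filter (· ⊆ S), A T) * (∑ T ∈ F.filter (· ⊆ S), B T) := by
  intro S hS
  have key : ∀ T ∈ F.filter (· ⊆ S),
      (F ×ˢ F).filter (fun p => p.1 ∪ p.2 = T) =
      ((F.filter (· ⊆ S)) ×ˢ (F.filter (· ⊆ S))).filter (fun p => p.1 ∪ p.2 = T) := by
    intro T hT
    simp only [Finset.mem_filter] at hT
    ext p
    simp only [Finset.mem_filter, Finset.mem_product]
    constructor
    · rintro ⟨⟨h1, h2⟩, hu⟩
      exact ⟨⟨⟨h1, (hu ▸ Finset.subset_union_left).trans hT.2⟩,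
        ⟨h2, (hu ▸ Finset.subset_union_right).trans hT.2⟩⟩, hu⟩
    · rintro ⟨⟨⟨h1, _⟩, ⟨h2, _⟩⟩, hu⟩
      exact ⟨⟨h1, h2⟩, hu⟩
  rw [Finset.sum_congr rfl (fun T hT => by rw [key T hT]),
    Finset.sum_fiberwise_of_maps_to (fun p hp => ?_), Finset.sum_mul_sum,
    Finset.sum_product]
  simp only [Finset.mem_product, Finset.mem_filter] at hp ⊢
  obtain ⟨⟨h1, h1S⟩, ⟨h2, h2S⟩⟩ := hp
  exact ⟨hF p.1 (p.1 ∪ p.2) S Finset.subset_union_left (Finset.union_subset h1S h2S) h1 hS,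
    Finset.union_subset h1S h2S⟩
end

section
/- Let F ⊆ 2^U be a set family and k a natural number. Define kF ⊆ 2^{[k]×U} as the family of sets S ⊆ [k] × U such that for each i ∈ [k], the i-th slice π_U^i(S) = { u ∈ U : (i,u) ∈ S } belongs to F. If F is a closure difference, then kF is also a closure difference. -/
/-- The upward closure of a set family under supersets. -/
def upClos {α : Type*} (G : Set (Set α)) : Set (Set α) := {S | ∃ T ∈ G, T ⊆ S}

/-- A set family is a closure difference if it is the difference of two upward closures. -/
def ClosureDiff {α : Type*} (F : Set (Set α)) : Prop :=
  ∃ Fp Fm : Set (Set α), F = upClos Fp \ upClos Fm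

lemma closureDiff_iff_interval {α : Type*} (F : Set (Set α)) :
    ClosureDiff F ↔ ∀ W T S : Set α, W ∈ F → S ∈ F → W ⊆ T → T ⊆ S → T ∈ F := by
  constructor
  · rintro ⟨Fp, Fm, rfl⟩ W T S hW hS hWT hTS
    refine ⟨?_, ?_⟩
    · obtain ⟨P, hP, hPW⟩ := hW.1
      exact ⟨P, hP, hPW.trans hWT⟩
    · rintro ⟨M, hM, hMT⟩
      exact hS.2 ⟨M, hM, hMT.trans hTS⟩
  · intro hint
    refine ⟨F, upClos F \ F, ?_⟩
    ext S
    constructor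
    · intro hS
      refine ⟨⟨S, hS, le_refl S⟩, ?_⟩
      rintro ⟨T, ⟨⟨W, hW, hWT⟩, hTF⟩, hTS⟩
      exact hTF (hint W T S hW hS hWT hTS)
    · rintro ⟨⟨W, hW, hWS⟩, hS2⟩
      by_contra hSF
      exact hS2 ⟨S, ⟨⟨W, hW, hWS⟩, hSF⟩, le_refl S⟩

/-- If `F` is a closure difference then so is the family `kF` of subsets of
`[k] × U` all of whose slices lie in `F`. -/
theorem closureDiff_slices {U : Type*} (F : Set (Set U)) (k : ℕ)
    (h : ClosureDiff F) :
    ClosureDiff {S : Set (Fin k × U) | ∀ i : Fin k, {u : U | (i, u) ∈ S} ∈ F} := by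
  rw [closureDiff_iff_interval] at h ⊢
  intro W T S hW hS hWT hTS i
  exact h _ _ _ (hW i) (hS i) (fun u hu => hWT hu) (fun u hu => hTS hu)
end
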